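/- arXiv:1206.2557 — 2 statements merged into one kernel-verified Lean document; each statement's English description precedes it below -/
import Mathlib

section
/- Let w_1,…,w_n ∈ ℝ^d. For integers 1 ≤ k ≤ l ≤ n and j ∈ {1,…,d}, let H_{k:l,j}(t) = (1/(l−k+1)) #{i ∈ {k,…,l} : w_{ij} ≤ t} be the empirical c.d.f. of w_{kj},…,w_{lj}, let Q_{k:l,j}(u) = inf{t ∈ ℝ : H_{k:l,j}(t) ≥ u} for u ∈ (0,1], and let Ŵ_{ij}^{k:l} = H_{k:l,j}(w_{ij}). Then sup over all 1 ≤ k ≤ l ≤ n and all u ∈ (0,1]^d of |Σ_{i=k}^{l} (1{∀j, w_{ij} ≤ Q_{k:l,j}(u_j)} − 1{∀j, Ŵ_{ij}^{k:l} ≤ u_j})| is at most Σ_{j=1}^d max_{v∈ℝ} #{i ∈ {1,…,n} : w_{ij} = v}. -/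
/-!
Write `F` for the empirical c.d.f. of a coordinate and `Q` for its quantile function. Since
`F` jumps at every data point, `F (y i) ≤ u` forces `y i ≤ Q u`; conversely `u ≤ F x` forces
`Q u ≤ x`. These use `u ≤ 1` and `0 < u`, which make the set defining `Q u` nonempty and
bounded below respectively (otherwise `sInf` returns the junk value `0`). Hence an observation whose pseudo-observations
all lie below `u` also lies below the quantile vector, and an observation counted only on the
quantile side hits `Q (u j)` exactly in some coordinate `j`. Each summand thus lies between `0`
and the number of such ties, and summing over the observations gives the multiplicity bound.
-/

open Finset

noncomputable section

/-- Empirical c.d.f. of the `j`-th coordinates of the subsample `w k, …, w l`. -/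
def subEcdf (d : ℕ) (w : ℕ → Fin d → ℝ) (k l : ℕ) (j : Fin d) (t : ℝ) : ℝ :=
  (((Finset.Icc k l).filter fun i => w i j ≤ t).card : ℝ) / ((l : ℝ) - (k : ℝ) + 1)

/-- Generalized inverse (quantile function) of the subsample empirical c.d.f. -/
def subEquant (d : ℕ) (w : ℕ → Fin d → ℝ) (k l : ℕ) (j : Fin d) (u : ℝ) : ℝ :=
  sInf {t : ℝ | u ≤ subEcdf d w k l j t}

variable {ι : Type*}

def empiricalCdf (s : Finset ι) (y : ι → ℝ) (t : ℝ) : ℝ :=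
  #{i ∈ s | y i ≤ t} / #s

def empiricalQuantile (s : Finset ι) (y : ι → ℝ) (u : ℝ) : ℝ :=
  sInf {t | u ≤ empiricalCdf s y t}

section EmpiricalCdf

variable {s : Finset ι} {y : ι → ℝ}

theorem empiricalCdf_lt_of_lt {i : ι} (hi : i ∈ s) {t : ℝ} (ht : t < y i) :
    empiricalCdf s y t < empiricalCdf s y (y i) := by
  have hs : (0 : ℝ) < #s := by exact_mod_cast card_pos.2 ⟨i, hi⟩
  have hsub : {j ∈ s | y j ≤ t} ⊂ {j ∈ s | y j ≤ y i} :=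
    ⟨fun j hj => mem_filter.2 ⟨(mem_filter.1 hj).1, (mem_filter.1 hj).2.trans ht.le⟩,
      fun h => (mem_filter.1 (h (mem_filter.2 ⟨hi, le_rfl⟩))).2.not_gt ht⟩
  unfold empiricalCdf
  gcongr

theorem empiricalCdf_eq_one {t : ℝ} (hs : s.Nonempty) (ht : ∀ i ∈ s, y i ≤ t) :
    empiricalCdf s y t = 1 := by
  rw [empiricalCdf, filter_true_of_mem ht]
  exact div_self (by exact_mod_cast hs.card_pos.ne')

theorem nonempty_filter_le_of_pos_empiricalCdf {t : ℝ} (ht : 0 < empiricalCdf s y t) :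
    {i ∈ s | y i ≤ t}.Nonempty := by
  rw [← card_pos, Nat.pos_iff_ne_zero]
  intro h0
  simp [empiricalCdf, h0] at ht

theorem le_empiricalQuantile_of_empiricalCdf_le {i : ι} (hi : i ∈ s) {u : ℝ} (hu : u ≤ 1)
    (h : empiricalCdf s y (y i) ≤ u) : y i ≤ empiricalQuantile s y u := by
  obtain ⟨B, hB⟩ := (s.image y).bddAbove
  refine le_csInf ⟨B, ?_⟩ fun t ht => ?_
  · rw [Set.mem_ofPred_eq, empiricalCdf_eq_one ⟨i, hi⟩ fun j hj => hB (mem_image_of_mem y hj)]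
    exact hu
  · by_contra! hlt
    exact (empiricalCdf_lt_of_lt hi hlt).not_ge (h.trans ht)

theorem empiricalQuantile_le_of_le_empiricalCdf {u x : ℝ} (hu : 0 < u)
    (h : u ≤ empiricalCdf s y x) : empiricalQuantile s y u ≤ x := by
  obtain ⟨b, hb⟩ := (s.image y).bddBelow
  refine csInf_le ⟨b, fun t ht => ?_⟩ h
  obtain ⟨i, hi⟩ := nonempty_filter_le_of_pos_empiricalCdf (hu.trans_le ht)
  rw [mem_filter] at hi
  exact (hb (mem_image_of_mem y hi.1)).trans hi.2

end EmpiricalCdf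

theorem subEcdf_eq_empiricalCdf {d : ℕ} {w : ℕ → Fin d → ℝ} {k l : ℕ} (hkl : k ≤ l)
    (j : Fin d) : subEcdf d w k l j = empiricalCdf (Icc k l) (fun i => w i j) := by
  funext t
  rw [subEcdf, empiricalCdf, Nat.card_Icc, Nat.cast_sub (hkl.trans l.le_succ)]
  push_cast
  ring_nf

theorem subEquant_eq_empiricalQuantile {d : ℕ} {w : ℕ → Fin d → ℝ} {k l : ℕ} (hkl : k ≤ l)
    (j : Fin d) : subEquant d w k l j = empiricalQuantile (Icc k l) (fun i => w i j) := by
  funext u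
  rw [subEquant, empiricalQuantile, subEcdf_eq_empiricalCdf hkl]

theorem ite_forall_le_sub_ite_forall_mem_Icc {J : Type*} [Fintype J] {x q : J → ℝ}
    {R : J → Prop} [Decidable (∀ j, x j ≤ q j)] [Decidable (∀ j, R j)]
    (hle : ∀ j, R j → x j ≤ q j) (hlt : ∀ j, x j < q j → R j) :
    (if ∀ j, x j ≤ q j then (1 : ℝ) else 0) - (if ∀ j, R j then 1 else 0) ∈
      Set.Icc 0 (∑ j, if x j = q j then 1 else 0) := by
  have hsum_nonneg : (0 : ℝ) ≤ ∑ j, if x j = q j then 1 else 0 :=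
    sum_nonneg fun j _ => by positivity
  by_cases hR : ∀ j, R j
  · rw [if_pos fun j => hle j (hR j), if_pos hR, sub_self]
    exact Set.mem_Icc.2 ⟨le_rfl, hsum_nonneg⟩
  rw [if_neg hR, sub_zero]
  by_cases hx : ∀ j, x j ≤ q j
  · obtain ⟨j₀, hj₀⟩ := not_forall.1 hR
    have htie : x j₀ = q j₀ := (hx j₀).eq_of_not_lt fun h => hj₀ (hlt j₀ h)
    have hone : (1 : ℝ) ≤ ∑ j, if x j = q j then 1 else 0 :=
      (if_pos htie).symm.le.trans
        (single_le_sum (f := fun j => if x j = q j then (1 : ℝ) else 0)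
          (fun j _ => by positivity) (mem_univ j₀))
    rw [if_pos hx]
    exact Set.mem_Icc.2 ⟨zero_le_one, hone⟩
  · rw [if_neg hx]
    exact Set.mem_Icc.2 ⟨le_rfl, hsum_nonneg⟩

theorem card_filter_eq_le_ciSup {α : Type*} [DecidableEq α] (s : Finset ι) (y : ι → α)
    (v : α) : (#{i ∈ s | y i = v} : ℝ) ≤ ⨆ v, (#{i ∈ s | y i = v} : ℝ) :=
  le_ciSup (f := fun v => (#{i ∈ s | y i = v} : ℝ))
    ⟨#s, by rintro _ ⟨v, rfl⟩; exact Nat.cast_le.2 (card_filter_le _ _)⟩ v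

theorem rank_vs_quantile_indicator_bound_general (n d : ℕ) (w : ℕ → Fin d → ℝ)
    (k l : ℕ) (hk : 1 ≤ k) (hln : l ≤ n)
    (u : Fin d → ℝ) (hu0 : ∀ j, 0 < u j) (hu1 : ∀ j, u j ≤ 1) :
    |∑ i ∈ Finset.Icc k l,
        ((if ∀ j, w i j ≤ subEquant d w k l j (u j) then (1:ℝ) else 0)
          - (if ∀ j, subEcdf d w k l j (w i j) ≤ u j then (1:ℝ) else 0))|
      ≤ ∑ j : Fin d, ⨆ v : ℝ, (((Finset.Icc 1 n).filter fun i => w i j = v).card : ℝ) := by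
  have hterm : ∀ i ∈ Icc k l,
      (if ∀ j, w i j ≤ subEquant d w k l j (u j) then (1:ℝ) else 0)
        - (if ∀ j, subEcdf d w k l j (w i j) ≤ u j then (1:ℝ) else 0) ∈
      Set.Icc 0 (∑ j, if w i j = subEquant d w k l j (u j) then 1 else 0) := by
    intro i hi
    have hkl : k ≤ l := (mem_Icc.1 hi).1.trans (mem_Icc.1 hi).2
    simp only [subEquant_eq_empiricalQuantile hkl, subEcdf_eq_empiricalCdf hkl]
    exact ite_forall_le_sub_ite_forall_mem_Icc
      (fun j => le_empiricalQuantile_of_empiricalCdf_le hi (hu1 j))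
      (fun j hlt => le_of_not_gt fun h => hlt.not_ge
        (empiricalQuantile_le_of_le_empiricalCdf (hu0 j) h.le))
  rw [abs_of_nonneg (sum_nonneg fun i hi => (hterm i hi).1)]
  calc _ ≤ ∑ i ∈ Icc k l, ∑ j, if w i j = subEquant d w k l j (u j) then (1:ℝ) else 0 :=
        sum_le_sum fun i hi => (hterm i hi).2
    _ = ∑ j, (#{i ∈ Icc k l | w i j = subEquant d w k l j (u j)} : ℝ) := by
        rw [sum_comm]
        simp only [sum_boole]
    _ ≤ ∑ j, (#{i ∈ Icc 1 n | w i j = subEquant d w k l j (u j)} : ℝ) := by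
        gcongr
    _ ≤ _ := sum_le_sum fun j _ => card_filter_eq_le_ciSup _ _ _

/-- for every subsample `w k, …, w l` of `w 1, …, w n` and every
`u ∈ (0,1]^d`, the difference between the number of points below the vector of
subsample empirical quantiles and the number of pseudo-observations below `u` is
bounded in absolute value by the sum over coordinates of the maximal multiplicity of a
value in that coordinate. -/
theorem rank_vs_quantile_indicator_bound (n d : ℕ) (w : ℕ → Fin d → ℝ)
    (k l : ℕ) (hk : 1 ≤ k) (hkl : k ≤ l) (hln : l ≤ n)
    (u : Fin d → ℝ) (hu0 : ∀ j, 0 < u j) (hu1 : ∀ j, u j ≤ 1) :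
    |∑ i ∈ Finset.Icc k l,
        ((if ∀ j, w i j ≤ subEquant d w k l j (u j) then (1:ℝ) else 0)
          - (if ∀ j, subEcdf d w k l j (w i j) ≤ u j then (1:ℝ) else 0))|
      ≤ ∑ j : Fin d, ⨆ v : ℝ, (((Finset.Icc 1 n).filter fun i => w i j = v).card : ℝ) :=
  rank_vs_quantile_indicator_bound_general n d w k l hk hln u hu0 hu1
end
end

section
/- Let ξ_1,…,ξ_n be real random variables on a probability space (Ω, P) such that for all integers 1 ≤ k ≤ l ≤ n, the sum Σ_{i=k}^{l} ξ_i has the same distribution as Σ_{i=1}^{l−k+1} ξ_i, and let ν > 0 be such that E|Σ_{i=1}^{r} ξ_i|^ν < ∞ for all 1 ≤ r ≤ n. Then for every η > 0 and every real b ≥ 1: P( max over 1 ≤ k ≤ l ≤ n with l − k ≥ b of |(1/(l−k+1)) Σ_{i=k}^{l} ξ_i| > η ) ≤ η^{-ν} · n · Σ_{r integer, b < r ≤ n} r^{-ν} · E|Σ_{i=1}^{r} ξ_i|^ν. -/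
/-!
Index the windows by their start `k` and length `r`. A window average exceeds `η` iff the window
sum exceeds `η r`; by stationarity that event has the probability of `|ξ_1 + ⋯ + ξ_r| > η r`,
which Markov's inequality for `|·|^ν` bounds by `(η r)^{-ν} E|ξ_1 + ⋯ + ξ_r|^ν`. A union bound
over the at most `n` starts and the lengths `r > b` gives the claim.
-/

open MeasureTheory Finset ProbabilityTheory

theorem measure_lt_abs_le_rpow_neg_mul_integral {Ω : Type*} [MeasurableSpace Ω]
    {μ : Measure Ω} {X : Ω → ℝ} {ν t : ℝ} (hν : 0 < ν) (ht : 0 < t)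
    (hint : Integrable (fun ω => |X ω| ^ ν) μ) :
    μ {ω | t < |X ω|} ≤ ENNReal.ofReal (t ^ (-ν) * ∫ ω, |X ω| ^ ν ∂μ) := by
  have htν : 0 < t ^ ν := Real.rpow_pos_of_pos ht ν
  have hsub : {ω | t < |X ω|} ⊆ {ω | ENNReal.ofReal (t ^ ν) ≤ ENNReal.ofReal (|X ω| ^ ν)} :=
    fun ω hω => ENNReal.ofReal_le_ofReal (Real.rpow_le_rpow ht.le (le_of_lt hω) hν.le)
  calc μ {ω | t < |X ω|}
      ≤ (∫⁻ ω, ENNReal.ofReal (|X ω| ^ ν) ∂μ) / ENNReal.ofReal (t ^ ν) :=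
        (measure_mono hsub).trans <| meas_ge_le_lintegral_div
          hint.aemeasurable.ennreal_ofReal (by simpa using htν) ENNReal.ofReal_ne_top
    _ = ENNReal.ofReal (t ^ (-ν) * ∫ ω, |X ω| ^ ν ∂μ) := by
        rw [← ofReal_integral_eq_lintegral_ofReal hint (ae_of_all _ fun ω => by positivity),
          ← ENNReal.ofReal_div_of_pos htν, Real.rpow_neg ht.le, inv_mul_eq_div]

theorem ProbabilityTheory.IdentDistrib.measure_lt_abs_le_rpow_neg_mul_integral
    {Ω Ω' : Type*} [MeasurableSpace Ω] [MeasurableSpace Ω'] {μ : Measure Ω} {μ' : Measure Ω'}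
    {X : Ω → ℝ} {Y : Ω' → ℝ} (hXY : IdentDistrib X Y μ μ') {ν t : ℝ} (hν : 0 < ν) (ht : 0 < t)
    (hint : Integrable (fun ω => |Y ω| ^ ν) μ') :
    μ {ω | t < |X ω|} ≤ ENNReal.ofReal (t ^ (-ν) * ∫ ω, |Y ω| ^ ν ∂μ') :=
  (hXY.measure_mem_eq (measurableSet_lt measurable_const measurable_abs)).trans_le
    (_root_.measure_lt_abs_le_rpow_neg_mul_integral hν ht hint)

theorem lt_abs_one_div_mul_iff {r s η : ℝ} (hr : 0 < r) : η < |1 / r * s| ↔ η * r < |s| := by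
  rw [abs_mul, abs_of_pos (one_div_pos.mpr hr), one_div, inv_mul_eq_div, lt_div_iff₀ hr]

theorem identDistrib_sum_Icc_shift {Ω : Type*} [MeasurableSpace Ω] {P : Measure Ω} {n : ℕ}
    {ξ : ℕ → Ω → ℝ} (hmeas : ∀ i, Measurable (ξ i))
    (hstat : ∀ k l : ℕ, 1 ≤ k → k ≤ l → l ≤ n →
      Measure.map (fun ω => ∑ i ∈ Icc k l, ξ i ω) P
        = Measure.map (fun ω => ∑ i ∈ Icc 1 (l - k + 1), ξ i ω) P)
    {k r : ℕ} (hk : 1 ≤ k) (hr : 1 ≤ r) (hkr : k + r ≤ n + 1) :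
    IdentDistrib (fun ω => ∑ i ∈ Icc k (k + r - 1), ξ i ω) (fun ω => ∑ i ∈ Icc 1 r, ξ i ω) P P where
  aemeasurable_fst := (Finset.measurable_sum _ fun i _ => hmeas i).aemeasurable
  aemeasurable_snd := (Finset.measurable_sum _ fun i _ => hmeas i).aemeasurable
  map_eq := by
    have hlen : k + r - 1 - k + 1 = r := by omega
    simpa only [hlen] using hstat k (k + r - 1) hk (by omega) (by omega)

theorem setOf_exists_window_average_subset_iUnion {Ω : Type*} (n : ℕ) (ξ : ℕ → Ω → ℝ)
    (η b : ℝ) :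
    {ω | ∃ k l : ℕ, 1 ≤ k ∧ k ≤ l ∧ l ≤ n ∧ b ≤ (l : ℝ) - (k : ℝ) ∧
        η < |(1 / ((l : ℝ) - (k : ℝ) + 1)) * ∑ i ∈ Icc k l, ξ i ω|} ⊆
      ⋃ k ∈ Icc 1 n, ⋃ r ∈ ((Icc 1 n).filter (fun r : ℕ => b < (r : ℝ))).filter
        (fun r => k + r ≤ n + 1), {ω | η * r < |∑ i ∈ Icc k (k + r - 1), ξ i ω|} := by
  rintro ω ⟨k, l, hk, hkl, hln, hbl, hω⟩
  have hr : ((l - k + 1 : ℕ) : ℝ) = (l : ℝ) - (k : ℝ) + 1 := by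
    push_cast [Nat.cast_sub hkl]; ring
  have hl : k + (l - k + 1) - 1 = l := by omega
  simp only [Set.mem_iUnion, Set.mem_ofPred_eq, mem_filter, mem_Icc, exists_prop]
  refine ⟨k, ⟨hk, hkl.trans hln⟩, l - k + 1,
    ⟨⟨⟨by omega, by omega⟩, by rw [hr]; linarith⟩, by omega⟩, ?_⟩
  rwa [hl, ← lt_abs_one_div_mul_iff (by positivity), hr]

theorem measure_window_sum_gt_le {Ω : Type*} [MeasurableSpace Ω] {P : Measure Ω} {n : ℕ}
    {ξ : ℕ → Ω → ℝ} (hmeas : ∀ i, Measurable (ξ i))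
    (hstat : ∀ k l : ℕ, 1 ≤ k → k ≤ l → l ≤ n →
      Measure.map (fun ω => ∑ i ∈ Icc k l, ξ i ω) P
        = Measure.map (fun ω => ∑ i ∈ Icc 1 (l - k + 1), ξ i ω) P)
    {ν η : ℝ} (hν : 0 < ν) (hη : 0 < η) {k r : ℕ} (hk : 1 ≤ k) (hr : 1 ≤ r)
    (hkr : k + r ≤ n + 1) (hint : Integrable (fun ω => |∑ i ∈ Icc 1 r, ξ i ω| ^ ν) P) :
    P {ω | η * r < |∑ i ∈ Icc k (k + r - 1), ξ i ω|} ≤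
      ENNReal.ofReal (η ^ (-ν) * ((r : ℝ) ^ (-ν) * ∫ ω, |∑ i ∈ Icc 1 r, ξ i ω| ^ ν ∂P)) := by
  have hr0 : (0 : ℝ) < r := by exact_mod_cast hr
  have := (identDistrib_sum_Icc_shift hmeas hstat hk hr hkr).measure_lt_abs_le_rpow_neg_mul_integral
    hν (mul_pos hη hr0) hint
  rwa [Real.mul_rpow hη.le hr0.le, mul_assoc] at this

theorem window_average_maximal_inequality_general {Ω : Type*} [MeasurableSpace Ω]
    (P : Measure Ω)
    (n : ℕ) (ξ : ℕ → Ω → ℝ) (hmeas : ∀ i, Measurable (ξ i))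
    (hstat : ∀ k l : ℕ, 1 ≤ k → k ≤ l → l ≤ n →
      Measure.map (fun ω => ∑ i ∈ Finset.Icc k l, ξ i ω) P
        = Measure.map (fun ω => ∑ i ∈ Finset.Icc 1 (l - k + 1), ξ i ω) P)
    (ν : ℝ) (hν : 0 < ν)
    (hint : ∀ r : ℕ, 1 ≤ r → r ≤ n →
      Integrable (fun ω => |∑ i ∈ Finset.Icc 1 r, ξ i ω| ^ ν) P)
    (η : ℝ) (hη : 0 < η) (b : ℝ) :
    P {ω | ∃ k l : ℕ, 1 ≤ k ∧ k ≤ l ∧ l ≤ n ∧ b ≤ (l : ℝ) - (k : ℝ) ∧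
          η < |(1 / ((l : ℝ) - (k : ℝ) + 1)) * ∑ i ∈ Finset.Icc k l, ξ i ω|}
      ≤ ENNReal.ofReal (η ^ (-ν) * n *
          ∑ r ∈ (Finset.Icc 1 n).filter (fun r : ℕ => b < (r : ℝ)),
            (r : ℝ) ^ (-ν) * ∫ ω, |∑ i ∈ Finset.Icc 1 r, ξ i ω| ^ ν ∂P) := by
  set T := (Icc 1 n).filter (fun r : ℕ => b < (r : ℝ))
  set c : ℕ → ℝ := fun r => η ^ (-ν) * ((r : ℝ) ^ (-ν) * ∫ ω, |∑ i ∈ Icc 1 r, ξ i ω| ^ ν ∂P)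
  calc P _ ≤ ∑ k ∈ Icc 1 n, ∑ r ∈ T.filter (fun r => k + r ≤ n + 1),
        P {ω | η * r < |∑ i ∈ Icc k (k + r - 1), ξ i ω|} :=
        (measure_mono (setOf_exists_window_average_subset_iUnion n ξ η b)).trans <|
          (measure_biUnion_finset_le _ _).trans <|
            sum_le_sum fun k _ => measure_biUnion_finset_le _ _
    _ ≤ ∑ k ∈ Icc 1 n, ∑ r ∈ T, ENNReal.ofReal (c r) := by
        refine sum_le_sum fun k hk => le_trans (sum_le_sum fun r hr => ?_)
          (sum_le_sum_of_subset (filter_subset _ _))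
        simp only [mem_filter, mem_Icc, T] at hk hr
        exact measure_window_sum_gt_le hmeas hstat hν hη hk.1 hr.1.1.1 hr.2
          (hint r hr.1.1.1 hr.1.1.2)
    _ = ENNReal.ofReal (η ^ (-ν) * n * ∑ r ∈ T,
          (r : ℝ) ^ (-ν) * ∫ ω, |∑ i ∈ Icc 1 r, ξ i ω| ^ ν ∂P) := by
        rw [sum_const, Nat.card_Icc, ← ENNReal.ofReal_sum_of_nonneg (fun r _ => by positivity),
          nsmul_eq_mul, ← ENNReal.ofReal_natCast, ← ENNReal.ofReal_mul (by positivity),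
          Nat.add_sub_cancel, ← mul_sum]
        congr 1; ring

/-- maximal inequality for window averages. If all window sums
`Σ_{i=k}^l ξ_i` of length `r = l−k+1` have the same distribution as `Σ_{i=1}^r ξ_i`
and `E|Σ_{i=1}^r ξ_i|^ν < ∞`, then for every `η > 0` and `b ≥ 1`,
`P(max over windows of length ≥ b+1 of |window average| > η)`
is at most `η^{−ν}·n·Σ_{b < r ≤ n} r^{−ν}·E|Σ_{i=1}^r ξ_i|^ν`. -/
theorem window_average_maximal_inequality {Ω : Type*} [MeasurableSpace Ω]
    (P : Measure Ω) [IsProbabilityMeasure P]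
    (n : ℕ) (ξ : ℕ → Ω → ℝ) (hmeas : ∀ i, Measurable (ξ i))
    (hstat : ∀ k l : ℕ, 1 ≤ k → k ≤ l → l ≤ n →
      Measure.map (fun ω => ∑ i ∈ Finset.Icc k l, ξ i ω) P
        = Measure.map (fun ω => ∑ i ∈ Finset.Icc 1 (l - k + 1), ξ i ω) P)
    (ν : ℝ) (hν : 0 < ν)
    (hint : ∀ r : ℕ, 1 ≤ r → r ≤ n →
      Integrable (fun ω => |∑ i ∈ Finset.Icc 1 r, ξ i ω| ^ ν) P)
    (η : ℝ) (hη : 0 < η) (b : ℝ) (hb : 1 ≤ b) :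
    P {ω | ∃ k l : ℕ, 1 ≤ k ∧ k ≤ l ∧ l ≤ n ∧ b ≤ (l : ℝ) - (k : ℝ) ∧
          η < |(1 / ((l : ℝ) - (k : ℝ) + 1)) * ∑ i ∈ Finset.Icc k l, ξ i ω|}
      ≤ ENNReal.ofReal (η ^ (-ν) * n *
          ∑ r ∈ (Finset.Icc 1 n).filter (fun r : ℕ => b < (r : ℝ)),
            (r : ℝ) ^ (-ν) * ∫ ω, |∑ i ∈ Finset.Icc 1 r, ξ i ω| ^ ν ∂P) :=
  window_average_maximal_inequality_general P n ξ hmeas hstat ν hν hint η hη b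
end
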